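/- arXiv:2212.14000 — 3 statements merged into one kernel-verified Lean document; each statement's English description precedes it below -/
import Mathlib

section
/- (Bimonoid axiom for preposets.) Let I = S ⊔ T ⊔ U ⊔ V be a finite set (the parts may be empty), let p be a preposet on S ⊔ T and q a preposet on U ⊔ V. Then (S∪U, T∪V) ≤ (p|q) if and only if (S,T) ≤ p and (U,V) ≤ q; moreover (p|q)|_{S∪U} = (p|_S | q|_U) and (p|q)|_{T∪V} = (p|_T | q|_V). -/
/-- A preposet on `I`, identified with its set of ordered pairs of distinct related
elements: `(a, b) ∈ P` means `a ≠ b` and `a ≥_p b`. -/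
def IsPreposet {I : Type*} (P : Set (I × I)) : Prop :=
  (∀ x ∈ P, x.1 ≠ x.2) ∧
    ∀ a b c : I, (a, b) ∈ P → (b, c) ∈ P → a ≠ c → (a, c) ∈ P

/-- `(S, T) ≤ p`: there is no pair `(t, s) ∈ P` with `t ∈ T` and `s ∈ S`. -/
def compLe {I : Type*} (P : Set (I × I)) (S T : Set I) : Prop :=
  ∀ t ∈ T, ∀ s ∈ S, (t, s) ∉ P

/-- Bimonoid axiom for preposets: for `I = S ⊔ T ⊔ U ⊔ V`, `p` a preposet on `S ⊔ T`
and `q` a preposet on `U ⊔ V`, one has `(S∪U, T∪V) ≤ (p|q)` iff `(S,T) ≤ p` and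
`(U,V) ≤ q`; moreover `(p|q)|_{S∪U} = (p|_S | q|_U)` and `(p|q)|_{T∪V} = (p|_T | q|_V)`,
where `(p|q) = p ∪ q` and `p|_S = p ∩ (S × S)`. -/
theorem statement7 {I : Type*} [Fintype I]
    (S T U V : Set I)
    (hST : Disjoint S T) (hSU : Disjoint S U) (hSV : Disjoint S V)
    (hTU : Disjoint T U) (hTV : Disjoint T V) (hUV : Disjoint U V)
    (hcover : S ∪ T ∪ U ∪ V = Set.univ)
    (P Q : Set (I × I)) (hP : IsPreposet P) (hQ : IsPreposet Q)
    (hPsupp : P ⊆ (S ∪ T) ×ˢ (S ∪ T)) (hQsupp : Q ⊆ (U ∪ V) ×ˢ (U ∪ V)) :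
    (compLe (P ∪ Q) (S ∪ U) (T ∪ V) ↔ compLe P S T ∧ compLe Q U V) ∧
    (P ∪ Q) ∩ ((S ∪ U) ×ˢ (S ∪ U)) = (P ∩ (S ×ˢ S)) ∪ (Q ∩ (U ×ˢ U)) ∧
    (P ∪ Q) ∩ ((T ∪ V) ×ˢ (T ∪ V)) = (P ∩ (T ×ˢ T)) ∪ (Q ∩ (V ×ˢ V)) := by

  have dST := Set.disjoint_left.mp hST
  have dSU := Set.disjoint_left.mp hSU
  have dSV := Set.disjoint_left.mp hSV
  have dTU := Set.disjoint_left.mp hTU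
  have dTV := Set.disjoint_left.mp hTV
  have dUV := Set.disjoint_left.mp hUV
  refine ⟨⟨fun h => ⟨fun t ht s hs hp => h t (Or.inl ht) s (Or.inl hs) (Or.inl hp),
      fun t ht s hs hq => h t (Or.inr ht) s (Or.inr hs) (Or.inr hq)⟩,
    fun ⟨h1, h2⟩ t ht s hs hpq => ?_⟩, ?_, ?_⟩
  · rcases hpq with hp | hq
    · obtain ⟨ht', hs'⟩ := hPsupp hp
      have ht2 : t ∈ T := by
        rcases ht' with h | h
        · rcases ht with h' | h'
          · exact absurd h' (dST h)
          · exact absurd h' (dSV h)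
        · exact h
      have hs2 : s ∈ S := by
        rcases hs' with h | h
        · exact h
        · rcases hs with h' | h'
          · exact absurd h (dST h')
          · exact absurd h' (dTU h)
      exact h1 t ht2 s hs2 hp
    · obtain ⟨ht', hs'⟩ := hQsupp hq
      have ht2 : t ∈ V := by
        rcases ht' with h | h
        · rcases ht with h' | h'
          · exact absurd h (dTU h')
          · exact absurd h' (dUV h)
        · exact h
      have hs2 : s ∈ U := by
        rcases hs' with h | h
        · exact h
        · rcases hs with h' | h'
          · exact absurd h (dSV h')
          · exact absurd h (dUV h')
      exact h2 t ht2 s hs2 hq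
  · ext ⟨a, b⟩
    constructor
    · rintro ⟨hpq | hpq, ha, hb⟩
      · obtain ⟨ha', hb'⟩ := hPsupp hpq
        refine Or.inl ⟨hpq, ?_, ?_⟩
        · rcases ha' with h | h
          · exact h
          · rcases ha with h' | h'
            · exact absurd h (dST h')
            · exact absurd h' (dTU h)
        · rcases hb' with h | h
          · exact h
          · rcases hb with h' | h'
            · exact absurd h (dST h')
            · exact absurd h' (dTU h)
      · obtain ⟨ha', hb'⟩ := hQsupp hpq
        refine Or.inr ⟨hpq, ?_, ?_⟩
        · rcases ha' with h | h
          · exact h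
          · rcases ha with h' | h'
            · exact absurd h (dSV h')
            · exact absurd h (dUV h')
        · rcases hb' with h | h
          · exact h
          · rcases hb with h' | h'
            · exact absurd h (dSV h')
            · exact absurd h (dUV h')
    · rintro (⟨hp, ha, hb⟩ | ⟨hq, ha, hb⟩)
      · exact ⟨Or.inl hp, Or.inl ha, Or.inl hb⟩
      · exact ⟨Or.inr hq, Or.inr ha, Or.inr hb⟩
  · ext ⟨a, b⟩
    constructor
    · rintro ⟨hpq | hpq, ha, hb⟩
      · obtain ⟨ha', hb'⟩ := hPsupp hpq
        refine Or.inl ⟨hpq, ?_, ?_⟩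
        · rcases ha' with h | h
          · rcases ha with h' | h'
            · exact absurd h' (dST h)
            · exact absurd h' (dSV h)
          · exact h
        · rcases hb' with h | h
          · rcases hb with h' | h'
            · exact absurd h' (dST h)
            · exact absurd h' (dSV h)
          · exact h
      · obtain ⟨ha', hb'⟩ := hQsupp hpq
        refine Or.inr ⟨hpq, ?_, ?_⟩
        · rcases ha' with h | h
          · rcases ha with h' | h'
            · exact absurd h (dTU h')
            · exact absurd h' (dUV h)
          · exact h
        · rcases hb' with h | h
          · rcases hb with h' | h'
            · exact absurd h (dTU h')
            · exact absurd h' (dUV h)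
          · exact h
    · rintro (⟨hp, ha, hb⟩ | ⟨hq, ha, hb⟩)
      · exact ⟨Or.inl hp, Or.inl ha, Or.inl hb⟩
      · exact ⟨Or.inr hq, Or.inr ha, Or.inr hb⟩
end

section
/- (Coassociativity for preposets.) Let I = S ⊔ T ⊔ U be a finite set (the parts may be empty) and let p be a preposet on I. The following are equivalent: (i) (S∪T, U) ≤ p and (S,T) ≤ p|_{S∪T}; (ii) (S, T∪U) ≤ p and (T,U) ≤ p|_{T∪U}; (iii) (S, T∪U) ≤ p and (S∪T, U) ≤ p. Moreover, the triples of restrictions always agree: ((p|_{S∪T})|_S, (p|_{S∪T})|_T, p|_U) = (p|_S, (p|_{T∪U})|_T, (p|_{T∪U})|_U). -/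
/-- Coassociativity for preposets: for `I = S ⊔ T ⊔ U` and `p` a preposet on `I`,
the three admissibility conditions (i), (ii), (iii) are equivalent, and the
corresponding triples of restrictions (`p|_S = p ∩ (S × S)`) always agree. -/
theorem statement8 {I : Type*} [Fintype I]
    (S T U : Set I)
    (hST : Disjoint S T) (hSU : Disjoint S U) (hTU : Disjoint T U)
    (hcover : S ∪ T ∪ U = Set.univ)
    (P : Set (I × I)) (hP : IsPreposet P) :
    ((compLe P (S ∪ T) U ∧ compLe (P ∩ ((S ∪ T) ×ˢ (S ∪ T))) S T) ↔
      (compLe P S (T ∪ U) ∧ compLe (P ∩ ((T ∪ U) ×ˢ (T ∪ U))) T U)) ∧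
    ((compLe P S (T ∪ U) ∧ compLe (P ∩ ((T ∪ U) ×ˢ (T ∪ U))) T U) ↔
      (compLe P S (T ∪ U) ∧ compLe P (S ∪ T) U)) ∧
    ((P ∩ ((S ∪ T) ×ˢ (S ∪ T))) ∩ (S ×ˢ S) = P ∩ (S ×ˢ S) ∧
     (P ∩ ((S ∪ T) ×ˢ (S ∪ T))) ∩ (T ×ˢ T) = (P ∩ ((T ∪ U) ×ˢ (T ∪ U))) ∩ (T ×ˢ T) ∧
     P ∩ (U ×ˢ U) = (P ∩ ((T ∪ U) ×ˢ (T ∪ U))) ∩ (U ×ˢ U)) := by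
  refine ⟨?_, ?_, ?_, ?_, ?_⟩
  · constructor
    · rintro ⟨h1, h2⟩
      refine ⟨?_, ?_⟩
      · rintro t (ht | hu) s hs hmem
        · exact h2 t ht s hs ⟨hmem, Or.inr ht, Or.inl hs⟩
        · exact h1 t hu s (Or.inl hs) hmem
      · rintro u hu t ht ⟨hmem, _, _⟩
        exact h1 u hu t (Or.inr ht) hmem
    · rintro ⟨h1, h2⟩
      refine ⟨?_, ?_⟩
      · rintro u hu x (hs | ht) hmem
        · exact h1 u (Or.inr hu) x hs hmem
        · exact h2 u hu x ht ⟨hmem, Or.inr hu, Or.inl ht⟩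
      · rintro t ht s hs ⟨hmem, _, _⟩
        exact h1 t (Or.inl ht) s hs hmem
  · constructor
    · rintro ⟨h1, h2⟩
      refine ⟨h1, ?_⟩
      rintro u hu x (hs | ht) hmem
      · exact h1 u (Or.inr hu) x hs hmem
      · exact h2 u hu x ht ⟨hmem, Or.inr hu, Or.inl ht⟩
    · rintro ⟨h1, h2⟩
      refine ⟨h1, ?_⟩
      rintro u hu t ht ⟨hmem, _, _⟩
      exact h2 u hu t (Or.inr ht) hmem
  · ext ⟨a, b⟩
    simp only [Set.mem_inter_iff, Set.mem_prod, Set.mem_union]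
    tauto
  · ext ⟨a, b⟩
    simp only [Set.mem_inter_iff, Set.mem_prod, Set.mem_union]
    tauto
  · ext ⟨a, b⟩
    simp only [Set.mem_inter_iff, Set.mem_prod, Set.mem_union]
    tauto
end

section
/- A preposet on a finite set I is determined by its admissible two-block compositions: if p and q are preposets on I such that for every pair (S,T) of nonempty subsets with I = S ⊔ T one has (S,T) ≤ p if and only if (S,T) ≤ q, then p = q. -/
lemma key_aux {I : Type*} (P Q : Set (I × I)) (hP : IsPreposet P) (hQ : IsPreposet Q)
    (h : ∀ S T : Set I, S.Nonempty → T.Nonempty → Disjoint S T → S ∪ T = Set.univ →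
      (compLe P S T ↔ compLe Q S T)) :
    ∀ a b : I, (a, b) ∈ P → (a, b) ∈ Q := by
  intro a b hab
  by_contra hq
  have hne : a ≠ b := hP.1 _ hab
  set S : Set I := {x | x = b ∨ (x, b) ∈ Q} with hS
  have hbS : b ∈ S := Or.inl rfl
  have haT : a ∈ Sᶜ := by
    intro h'
    rcases h' with h' | h'
    · exact hne h'
    · exact hq h'
  have hQle : compLe Q S Sᶜ := by
    intro t ht s hs hts
    apply ht
    rcases hs with rfl | hs
    · exact Or.inr hts
    · exact Or.inr (hQ.2 t s b hts hs (fun e => ht (e ▸ hbS)))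
  have hPle : compLe P S Sᶜ :=
    (h S Sᶜ ⟨b, hbS⟩ ⟨a, haT⟩ disjoint_compl_right (Set.union_compl_self S)).mpr hQle
  exact hPle a haT b hbS hab

/-- A preposet on a finite set is determined by its admissible two-block
compositions. -/
theorem statement10 {I : Type*} [Fintype I]
    (P Q : Set (I × I)) (hP : IsPreposet P) (hQ : IsPreposet Q)
    (h : ∀ S T : Set I, S.Nonempty → T.Nonempty → Disjoint S T → S ∪ T = Set.univ →
      (compLe P S T ↔ compLe Q S T)) :
    P = Q := by
  ext ⟨a, b⟩
  constructor
  · exact key_aux P Q hP hQ h a b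
  · exact key_aux Q P hQ hP (fun S T h1 h2 h3 h4 => (h S T h1 h2 h3 h4).symm) a b
end
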